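/- Let X be an infinite-dimensional complex Banach space and φ : B(X) → B(X) a surjective map satisfying K(φ(T)φ(S) + φ(S)φ(T)) = K(TS + ST) for all T, S ∈ B(X). Then for any F ∈ B(X), φ(F) has rank one if and only if F has rank one. -/

import Mathlib

def analyticCore {X : Type*} [NormedAddCommGroup X] [NormedSpace ℂ X]
    (T : X →L[ℂ] X) : Set X :=
  {x | ∃ δ : ℝ, 0 < δ ∧ ∃ u : ℕ → X, u 0 = x ∧ (∀ n, T (u (n + 1)) = u n) ∧
    ∀ n, ‖u n‖ ≤ δ ^ n * ‖x‖}

namespace AK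

variable {X : Type*} [NormedAddCommGroup X] [NormedSpace ℂ X]

open Submodule Set ContinuousLinearMap



theorem zero_mem_aC (B : X →L[ℂ] X) : (0 : X) ∈ analyticCore B := by
  exact ⟨1, one_pos, fun _ => 0, rfl, fun n => by simp, fun n => by simp⟩

theorem aC_zero : analyticCore (0 : X →L[ℂ] X) = {0} := by
  apply Set.eq_singleton_iff_unique_mem.2
  refine ⟨zero_mem_aC 0, ?_⟩
  rintro x ⟨δ, hδ, u, hu0, hrec, hb⟩
  have := hrec 0
  simp at this
  rw [← hu0, ← this]

theorem fixed_mem_aC {B : X →L[ℂ] X} {z : X} (h : B z = z) : z ∈ analyticCore B := by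
  exact ⟨1, one_pos, fun _ => z, rfl, fun n => h, fun n => by simp⟩

theorem unip_mem_aC {B : X →L[ℂ] X} {z w : X} (h : B z = z + w) (hw : B w = w) :
    z ∈ analyticCore B := by
  rcases eq_or_ne z 0 with rfl | hz
  · exact zero_mem_aC B
  have hzpos : (0:ℝ) < ‖z‖ := norm_pos_iff.2 hz
  refine ⟨1 + ‖w‖ / ‖z‖, by positivity, fun n => z - (n:ℂ) • w, by simp, ?_, ?_⟩
  · intro n
    have : B (z - ((n:ℕ)+1:ℂ) • w) = z + w - ((n:ℕ)+1:ℂ) • w := by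
      rw [map_sub, map_smul, h, hw]
    push_cast at this ⊢
    rw [this]
    module
  · intro n
    have h1 : ‖z - (n:ℂ) • w‖ ≤ ‖z‖ + n * ‖w‖ := by
      refine (norm_sub_le _ _).trans ?_
      rw [norm_smul]
      simp
    refine h1.trans ?_
    have hb : 1 + (n:ℝ) * (‖w‖/‖z‖) ≤ (1 + ‖w‖/‖z‖) ^ n := by
      have h0 : (0:ℝ) ≤ ‖w‖/‖z‖ := by positivity
      exact one_add_mul_le_pow (by linarith) n
    calc ‖z‖ + n * ‖w‖ = (1 + (n:ℝ) * (‖w‖/‖z‖)) * ‖z‖ := by field_simp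
    _ ≤ (1 + ‖w‖/‖z‖) ^ n * ‖z‖ := by
        apply mul_le_mul_of_nonneg_right hb hzpos.le

theorem aC_subset_range (B : X →L[ℂ] X) :
    analyticCore B ⊆ (LinearMap.range (B : X →ₗ[ℂ] X) : Submodule ℂ X) := by
  rintro x ⟨δ, hδ, u, hu0, hrec, hb⟩
  exact ⟨u 1, by show B (u (0 + 1)) = x; rw [hrec 0, hu0]⟩




theorem prescribe {n : ℕ} (v w : Fin n → X) (hli : LinearIndependent ℂ v) :
    ∃ T : X →L[ℂ] X, (∀ i, T (v i) = w i) ∧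
      ∀ z, T z ∈ Submodule.span ℂ (Set.range w) := by
  set V := Submodule.span ℂ (Set.range v) with hV
  haveI : FiniteDimensional ℂ V := FiniteDimensional.span_of_finite ℂ (Set.finite_range v)
  let b : Module.Basis (Fin n) ℂ V := Module.Basis.span hli
  have hco := fun i =>
    exists_extension_norm_eq (𝕜 := ℂ) V (LinearMap.toContinuousLinearMap (b.coord i))
  choose g hg _ using hco
  refine ⟨∑ i, (g i).smulRight (w i), ?_, ?_⟩
  · intro j
    have hmem : v j ∈ V := Submodule.subset_span ⟨j, rfl⟩
    have hgv : ∀ i, g i (v j) = if j = i then 1 else 0 := by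
      intro i
      have := hg i ⟨v j, hmem⟩
      simp only [LinearMap.coe_toContinuousLinearMap'] at this
      have hbj : (⟨v j, hmem⟩ : V) = b j := by
        apply Subtype.ext
        exact congrArg Subtype.val (Module.Basis.span_apply hli j).symm
      rw [this, hbj, Module.Basis.coord_apply, Module.Basis.repr_self]
      simp [Finsupp.single_apply]
    simp only [ContinuousLinearMap.sum_apply, ContinuousLinearMap.smulRight_apply, hgv]
    rw [Finset.sum_congr rfl (fun i _ => by rw [ite_smul, one_smul, zero_smul])]
    simp
  · intro z
    simp only [ContinuousLinearMap.sum_apply, ContinuousLinearMap.smulRight_apply]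
    exact Submodule.sum_mem _ fun i _ =>
      Submodule.smul_mem _ _ (Submodule.subset_span ⟨i, rfl⟩)





theorem dep_pair {u v : X} (h : ¬ LinearIndependent ℂ ![u, v]) (hu : u ≠ 0) :
    ∃ c : ℂ, v = c • u := by
  by_contra hc
  push_neg at hc
  exact h ((LinearIndependent.pair_iff' hu).2 fun a ha => hc a ha.symm)

theorem li_of_comp_equiv {m : ℕ} {f g : Fin m → X} (e : Fin m ≃ Fin m)
    (h : LinearIndependent ℂ f) (hg : ∀ i, g i = f (e i)) : LinearIndependent ℂ g := by
  have : g = f ∘ e := funext hg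
  rw [this]
  exact (linearIndependent_equiv e).2 h

theorem li_two {a b : X} (hb : b ≠ 0) (ha : a ∉ span ℂ ({b} : Set X)) :
    LinearIndependent ℂ ![a, b] := by
  rw [show (![a, b] : Fin 2 → X) = Fin.cons a ![b] from rfl, linearIndependent_fin_cons]
  refine ⟨linearIndependent_unique_iff.2 (by simpa using hb), by simpa using ha⟩

theorem li_three {a b c : X} (h2 : LinearIndependent ℂ ![b, c])
    (ha : a ∉ span ℂ ({b, c} : Set X)) : LinearIndependent ℂ ![a, b, c] := by
  rw [show (![a, b, c] : Fin 3 → X) = Fin.cons a ![b, c] from rfl,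
    linearIndependent_fin_cons]
  refine ⟨h2, ?_⟩
  have hset : ({c, b} : Set X) = {b, c} := Set.pair_comm c b
  simpa [hset] using ha

theorem li_four {a b c d : X} (h3 : LinearIndependent ℂ ![b, c, d])
    (ha : a ∉ span ℂ ({b, c, d} : Set X)) : LinearIndependent ℂ ![a, b, c, d] := by
  rw [show (![a, b, c, d] : Fin 4 → X) = Fin.cons a ![b, c, d] from rfl,
    linearIndependent_fin_cons]
  refine ⟨h3, ?_⟩
  have hset : ({d, c, b} : Set X) = {b, c, d} := by
    ext t; simp; tauto
  simpa [hset] using ha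

theorem li_four_snoc {a b c d : X} (h3 : LinearIndependent ℂ ![a, b, c])
    (hd : d ∉ span ℂ ({a, b, c} : Set X)) : LinearIndependent ℂ ![a, b, c, d] := by
  have h4 : LinearIndependent ℂ ![d, a, b, c] := li_four h3 hd
  refine li_of_comp_equiv (finRotate 4) h4 ?_
  intro i
  fin_cases i <;> rfl

theorem li_three_swap {a b c : X} (h : LinearIndependent ℂ ![b, a, c]) :
    LinearIndependent ℂ ![a, b, c] := by
  refine li_of_comp_equiv (Equiv.swap 0 1) h ?_
  intro i
  fin_cases i <;> simp [Equiv.swap_apply_def] <;> rfl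

theorem li_sub3of4 {a b c d : X} (h : LinearIndependent ℂ ![a, b, c, d]) :
    LinearIndependent ℂ ![a, b, c] := by
  have := h.comp (Fin.castSucc) (Fin.castSucc_injective 3)
  convert this using 1
  funext i
  fin_cases i <;> rfl

theorem not_li_swap {u v : X} (h : ¬ LinearIndependent ℂ ![u, v]) :
    ¬ LinearIndependent ℂ ![v, u] := by
  intro hli
  refine h (li_of_comp_equiv (Equiv.swap 0 1) hli ?_)
  intro i
  fin_cases i <;> simp [Equiv.swap_apply_def] <;> rfl

theorem li_pair_span {u v : X} (h : LinearIndependent ℂ ![u, v]) :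
    u ∉ span ℂ ({v} : Set X) := by
  intro hm
  rcases Submodule.mem_span_singleton.1 hm with ⟨c, hc⟩
  have h10 := (LinearIndependent.pair_iff.1 h 1 (-c) (by rw [← hc]; module)).1
  exact one_ne_zero h10





theorem dep_pair' {u v : X} (h : ¬ LinearIndependent ℂ ![u, v]) (hu : u ≠ 0) :
    ∃ c : ℂ, v = c • u := by
  by_contra hc
  push_neg at hc
  exact h ((LinearIndependent.pair_iff' hu).2 fun a ha => hc a ha.symm)

theorem rank_le_one_of_dep (S : X →L[ℂ] X)
    (h : ∀ z w : X, ¬ LinearIndependent ℂ ![S z, S w]) :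
    Module.rank ℂ (LinearMap.range (S : X →ₗ[ℂ] X)) ≤ 1 := by
  by_cases h0 : S = 0
  · subst h0
    have : LinearMap.range ((0 : X →L[ℂ] X) : X →ₗ[ℂ] X) = ⊥ := by
      ext z; simp [LinearMap.mem_range, eq_comm]
    rw [this]
    simp
  · have : ∃ x₀, S x₀ ≠ 0 := by
      by_contra hall
      push_neg at hall
      exact h0 (by ext z; simp [hall])
    obtain ⟨x₀, hx₀⟩ := this
    have hle : LinearMap.range (S : X →ₗ[ℂ] X) ≤ span ℂ ({S x₀} : Set X) := by
      rintro _ ⟨y, rfl⟩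
      rcases dep_pair' (h x₀ y) hx₀ with ⟨c, hc⟩
      exact Submodule.mem_span_singleton.2 ⟨c, by rw [ContinuousLinearMap.coe_coe, hc]⟩
    refine (Submodule.rank_mono hle).trans ?_
    refine (rank_span_le _).trans ?_
    simp

theorem dep_of_rank_le_one (S : X →L[ℂ] X)
    (h : Module.rank ℂ (LinearMap.range (S : X →ₗ[ℂ] X)) ≤ 1) (z w : X) :
    ¬ LinearIndependent ℂ ![S z, S w] := by
  intro hli
  have hf : ∀ i : Fin 2, (![S z, S w] i) ∈ LinearMap.range (S : X →ₗ[ℂ] X) := by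
    intro i; fin_cases i
    · exact ⟨z, rfl⟩
    · exact ⟨w, rfl⟩
  have hli2 : LinearIndependent ℂ (fun i : Fin 2 => (⟨![S z, S w] i, hf i⟩ :
      LinearMap.range (S : X →ₗ[ℂ] X))) := by
    apply LinearIndependent.of_comp (LinearMap.range (S : X →ₗ[ℂ] X)).subtype
    convert hli
    funext i; rfl
  have h2 := hli2.cardinal_lift_le_rank
  simp only [Cardinal.mk_fin, Cardinal.lift_natCast] at h2
  have h' := h2.trans (Cardinal.lift_le.2 h)
  rw [Cardinal.lift_one] at h'
  norm_num at h'

theorem rank_span_ge_three {s : Set X} {v1 v2 v3 : X}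
    (h1 : v1 ∈ s) (h2 : v2 ∈ s) (h3 : v3 ∈ s)
    (hli : LinearIndependent ℂ ![v1, v2, v3]) :
    ¬ (Module.rank ℂ (span ℂ s) ≤ 2) := by
  intro hle
  have hf : ∀ i : Fin 3, (![v1, v2, v3] i) ∈ span ℂ s := by
    intro i; fin_cases i <;> exact subset_span ‹_›
  have hli2 : LinearIndependent ℂ (fun i : Fin 3 => (⟨![v1, v2, v3] i, hf i⟩ :
      span ℂ s)) := by
    apply LinearIndependent.of_comp (span ℂ s).subtype
    convert hli
    funext i; rfl
  have h3' := hli2.cardinal_lift_le_rank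
  simp only [Cardinal.mk_fin, Cardinal.lift_natCast] at h3'
  have h' := h3'.trans (Cardinal.lift_le.2 hle)
  rw [show ((2:Cardinal) : Cardinal).lift = ((2:ℕ):Cardinal.{_}) from by norm_num] at h'
  norm_num at h'

theorem rank_B_le (A T : X →L[ℂ] X)
    (h : Module.rank ℂ (LinearMap.range (A : X →ₗ[ℂ] X)) ≤ 1) :
    Module.rank ℂ (LinearMap.range ((T * A + A * T : X →L[ℂ] X) : X →ₗ[ℂ] X)) ≤ 2 := by
  have hcoe : ((T * A + A * T : X →L[ℂ] X) : X →ₗ[ℂ] X)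
      = (T : X →ₗ[ℂ] X) ∘ₗ (A : X →ₗ[ℂ] X) + (A : X →ₗ[ℂ] X) ∘ₗ (T : X →ₗ[ℂ] X) := by
    ext z
    simp [ContinuousLinearMap.mul_apply]
  have hr : LinearMap.range ((T * A + A * T : X →L[ℂ] X) : X →ₗ[ℂ] X)
      = LinearMap.range ((T * A + A * T : X →L[ℂ] X) : X →ₗ[ℂ] X) := rfl
  rw [hr, hcoe]
  have h1 : LinearMap.rank ((T : X →ₗ[ℂ] X) ∘ₗ (A : X →ₗ[ℂ] X)
      + (A : X →ₗ[ℂ] X) ∘ₗ (T : X →ₗ[ℂ] X)) ≤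
      LinearMap.rank ((T : X →ₗ[ℂ] X) ∘ₗ (A : X →ₗ[ℂ] X)) +
      LinearMap.rank ((A : X →ₗ[ℂ] X) ∘ₗ (T : X →ₗ[ℂ] X)) :=
    LinearMap.rank_add_le _ _
  have h2 : LinearMap.rank ((T : X →ₗ[ℂ] X) ∘ₗ (A : X →ₗ[ℂ] X)) ≤
      LinearMap.rank (A : X →ₗ[ℂ] X) := LinearMap.rank_comp_le_right _ _
  have h3 : LinearMap.rank ((A : X →ₗ[ℂ] X) ∘ₗ (T : X →ₗ[ℂ] X)) ≤
      LinearMap.rank (A : X →ₗ[ℂ] X) := LinearMap.rank_comp_le_left _ _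
  have hA : LinearMap.rank (A : X →ₗ[ℂ] X) ≤ 1 := h
  calc LinearMap.rank _ ≤ _ + _ := h1
  _ ≤ 1 + 1 := add_le_add (h2.trans hA) (h3.trans hA)
  _ = 2 := by norm_num

theorem exists_not_mem_findim (hX : ¬ FiniteDimensional ℂ X) (p : Submodule ℂ X)
    [FiniteDimensional ℂ p] : ∃ v, v ∉ p := by
  by_contra hall
  push_neg at hall
  have : p = ⊤ := Submodule.eq_top_iff'.2 hall
  subst this
  exact hX ((Submodule.topEquiv : (⊤ : Submodule ℂ X) ≃ₗ[ℂ] X).finiteDimensional)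

theorem exists_mem_not_mem (q p : Submodule ℂ X) (hq : ¬ FiniteDimensional ℂ q)
    [FiniteDimensional ℂ p] : ∃ v ∈ q, v ∉ p := by
  by_contra hall
  push_neg at hall
  exact hq (Submodule.finiteDimensional_of_le (fun v hv => hall v hv))

theorem ker_not_findim (S : X →L[ℂ] X) (hX : ¬ FiniteDimensional ℂ X)
    [FiniteDimensional ℂ (LinearMap.range (S : X →ₗ[ℂ] X))] :
    ¬ FiniteDimensional ℂ (LinearMap.ker (S : X →ₗ[ℂ] X)) := by
  intro hker
  apply hX
  have hq := Submodule.rank_quotient_add_rank (LinearMap.ker (S : X →ₗ[ℂ] X))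
  have hk : LinearMap.ker (S : X →ₗ[ℂ] X) = LinearMap.ker (S : X →ₗ[ℂ] X) := rfl
  rw [hk] at hq
  have hlt : Module.rank ℂ X < Cardinal.aleph0 := by
    rw [← hq]
    apply Cardinal.add_lt_aleph0
    · have e := LinearMap.quotKerEquivRange (S : X →ₗ[ℂ] X)
      have hr : LinearMap.range (S : X →ₗ[ℂ] X) = LinearMap.range (S : X →ₗ[ℂ] X) := rfl
      rw [hk] at e
      rw [hr] at e
      rw [e.rank_eq]
      exact Module.rank_lt_aleph0_iff.2 (by infer_instance)
    · exact Module.rank_lt_aleph0_iff.2 hker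
  exact Module.rank_lt_aleph0_iff.1 hlt






theorem exists_nonzero_core (A : X →L[ℂ] X) (hA : A ≠ 0) :
    ∃ T : X →L[ℂ] X, ∃ z : X, z ≠ 0 ∧ z ∈ analyticCore (T * A + A * T) := by
  have : ∃ x, A x ≠ 0 := by
    by_contra hall
    push_neg at hall
    exact hA (by ext z; simp [hall])
  obtain ⟨x, hx⟩ := this
  have hx0 : x ≠ 0 := by rintro rfl; simp at hx
  by_cases hli : LinearIndependent ℂ ![x, A x]
  · obtain ⟨T, hT, -⟩ := prescribe ![x, A x] ![0, x] hli
    refine ⟨T, x, hx0, fixed_mem_aC ?_⟩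
    have h0 : T x = 0 := hT 0
    have h1 : T (A x) = x := hT 1
    simp only [ContinuousLinearMap.add_apply, ContinuousLinearMap.mul_apply]
    rw [h0, h1, map_zero, add_zero]
  · obtain ⟨c, hc⟩ := dep_pair' hli hx0
    have hc0 : c ≠ 0 := by
      rintro rfl
      rw [hc] at hx; simp at hx
    have hone : LinearIndependent ℂ ![x] := by
      refine linearIndependent_unique_iff.2 ?_
      simpa using hx0
    obtain ⟨T, hT, -⟩ := prescribe ![x] ![(2 * c)⁻¹ • x] hone
    refine ⟨T, x, hx0, fixed_mem_aC ?_⟩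
    have h0 : T x = (2 * c)⁻¹ • x := hT 0
    simp only [ContinuousLinearMap.add_apply, ContinuousLinearMap.mul_apply]
    rw [hc, map_smul, h0, map_smul, hc, smul_smul, smul_smul]
    rw [← add_smul]
    have : c * (2 * c)⁻¹ + (2 * c)⁻¹ * c = 1 := by field_simp; ring
    rw [this, one_smul]

theorem case_one (A : X →L[ℂ] X) {x y : X}
    (hli : LinearIndependent ℂ ![x, y, A x, A y]) :
    ∃ T : X →L[ℂ] X,
      ¬ (Module.rank ℂ (span ℂ (analyticCore (T * A + A * T))) ≤ 2) := by
  obtain ⟨T, hT, hTz⟩ := prescribe ![x, y, A x, A y] ![0, 0, x, y] hli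
  have hspan : ∀ z, T z ∈ span ℂ ({x, y} : Set X) := by
    intro z
    have := hTz z
    have hrange : Set.range ![(0:X), 0, x, y] = {0, x, y} := by
      ext t
      simp [Matrix.range_cons, Matrix.range_empty]
      tauto
    rw [hrange] at this
    simpa [Submodule.span_insert_zero] using this
  set B := T * A + A * T with hB
  have hTx : T x = 0 := hT 0
  have hTy : T y = 0 := hT 1
  have hTAx : T (A x) = x := hT 2
  have hTAy : T (A y) = y := hT 3
  have hBx : B x = x := by
    simp only [hB, ContinuousLinearMap.add_apply, ContinuousLinearMap.mul_apply]
    rw [hTx, hTAx, map_zero, add_zero]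
  have hBy : B y = y := by
    simp only [hB, ContinuousLinearMap.add_apply, ContinuousLinearMap.mul_apply]
    rw [hTy, hTAy, map_zero, add_zero]
  obtain ⟨a, b, hab⟩ := Submodule.mem_span_pair.1 (hspan (A (A x)))
  have hBAx : B (A x) = A x + T (A (A x)) := by
    simp only [hB, ContinuousLinearMap.add_apply, ContinuousLinearMap.mul_apply]
    rw [hTAx]
    rw [add_comm]
  have hBw : B (T (A (A x))) = T (A (A x)) := by
    rw [← hab, map_add, map_smul, map_smul, hBx, hBy]
  refine ⟨T, rank_span_ge_three (fixed_mem_aC hBx) (fixed_mem_aC hBy)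
    (unip_mem_aC hBAx hBw) (li_sub3of4 hli)⟩

theorem case_two (A : X →L[ℂ] X) (hX : ¬ FiniteDimensional ℂ X) {lam : ℂ}
    (hl : lam ≠ 0)
    (hrk : Module.rank ℂ (LinearMap.range ((A - lam • (1 : X →L[ℂ] X) : X →L[ℂ] X) : X →ₗ[ℂ] X)) ≤ 1) :
    ∃ T : X →L[ℂ] X,
      ¬ (Module.rank ℂ (span ℂ (analyticCore (T * A + A * T))) ≤ 2) := by
  set R := A - lam • (1 : X →L[ℂ] X) with hR
  haveI : FiniteDimensional ℂ (LinearMap.range (R : X →ₗ[ℂ] X)) :=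
    Module.rank_lt_aleph0_iff.1 (lt_of_le_of_lt hrk Cardinal.one_lt_aleph0)
  have hker := ker_not_findim R hX
  obtain ⟨u1, hu1k, hu1⟩ := exists_mem_not_mem (LinearMap.ker (R : X →ₗ[ℂ] X)) ⊥ hker
  haveI : FiniteDimensional ℂ (span ℂ ({u1} : Set X)) :=
    FiniteDimensional.span_of_finite ℂ (Set.finite_singleton u1)
  obtain ⟨u2, hu2k, hu2⟩ := exists_mem_not_mem (LinearMap.ker (R : X →ₗ[ℂ] X)) (span ℂ {u1}) hker
  haveI : FiniteDimensional ℂ (span ℂ ({u2, u1} : Set X)) :=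
    FiniteDimensional.span_of_finite ℂ (by simp)
  obtain ⟨u3, hu3k, hu3⟩ := exists_mem_not_mem (LinearMap.ker (R : X →ₗ[ℂ] X)) (span ℂ {u2, u1}) hker
  have hu1ne : u1 ≠ 0 := by simpa using hu1
  have hli : LinearIndependent ℂ ![u3, u2, u1] :=
    li_three (li_two hu1ne hu2) hu3
  have heig : ∀ u, u ∈ LinearMap.ker (R : X →ₗ[ℂ] X) → A u = lam • u := by
    intro u hu
    have : R u = 0 := hu
    rw [hR] at this
    simp only [ContinuousLinearMap.sub_apply, ContinuousLinearMap.smul_apply,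
      ContinuousLinearMap.one_apply] at this
    exact sub_eq_zero.1 this
  obtain ⟨T, hT, -⟩ := prescribe ![u3, u2, u1]
    ![(2*lam)⁻¹ • u3, (2*lam)⁻¹ • u2, (2*lam)⁻¹ • u1] hli
  have key : ∀ u, u ∈ LinearMap.ker (R : X →ₗ[ℂ] X) → T u = (2*lam)⁻¹ • u → (T * A + A * T) u = u := by
    intro u hu hTu
    simp only [ContinuousLinearMap.add_apply, ContinuousLinearMap.mul_apply]
    rw [heig u hu, map_smul, hTu, map_smul, heig u hu, smul_smul, smul_smul, ← add_smul]
    have h1 : lam * (2*lam)⁻¹ + (2*lam)⁻¹ * lam = 1 := by field_simp; ring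
    rw [h1, one_smul]
  exact ⟨T, rank_span_ge_three (fixed_mem_aC (key u3 hu3k (hT 0)))
    (fixed_mem_aC (key u2 hu2k (hT 1))) (fixed_mem_aC (key u1 hu1k (hT 2)))
    (li_three (li_two hu1ne hu2) hu3)⟩






theorem exists_ker_shift (q p : Submodule ℂ X) (hq : ¬ FiniteDimensional ℂ q)
    [FiniteDimensional ℂ p] (v : X) : ∃ k ∈ q, v + k ∉ p := by
  by_contra hall
  push_neg at hall
  have hv : v ∈ p := by simpa using hall 0 (zero_mem q)
  have hle : q ≤ p := by
    intro k hk
    have : v + k ∈ p := hall k hk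
    simpa using p.sub_mem this hv
  exact hq (Submodule.finiteDimensional_of_le hle)

theorem li_shear {w1 w2 a b : X} (l : ℂ)
    (h : LinearIndependent ℂ ![w1, w2, a, b]) :
    LinearIndependent ℂ ![w1, w2, l • w1 + a, l • w2 + b] := by
  rw [Fintype.linearIndependent_iff] at h ⊢
  intro g hg
  have hg' : (g 0 + l * g 2) • w1 + (g 1 + l * g 3) • w2 + g 2 • a + g 3 • b = 0 := by
    rw [Fin.sum_univ_four] at hg
    simp only [Matrix.cons_val_zero, Matrix.cons_val_one, Matrix.head_cons,
      Matrix.cons_val_two, Matrix.tail_cons, Matrix.cons_val_three] at hg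
    have h2 : (g 0 + l * g 2) • w1 + (g 1 + l * g 3) • w2 + g 2 • a + g 3 • b
        = g 0 • w1 + g 1 • w2 + g 2 • (l • w1 + a) + g 3 • (l • w2 + b) := by
      module
    rw [h2, hg]
  have key := h ![g 0 + l * g 2, g 1 + l * g 3, g 2, g 3] (by
    rw [Fin.sum_univ_four]
    simp only [Matrix.cons_val_zero, Matrix.cons_val_one, Matrix.head_cons,
      Matrix.cons_val_two, Matrix.tail_cons, Matrix.cons_val_three]
    exact hg')
  have k0 := key 0
  have k1 := key 1
  have k2 := key 2
  have k3 := key 3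
  simp only [Matrix.cons_val_zero, Matrix.cons_val_one, Matrix.head_cons,
    Matrix.cons_val_two, Matrix.tail_cons, Matrix.cons_val_three] at k0 k1 k2 k3
  intro i
  fin_cases i <;> simp [k2, k3] at k0 k1 ⊢ <;> simp [k0, k1, k2, k3]

theorem classification (A : X →L[ℂ] X) (hX : ¬ FiniteDimensional ℂ X)
    (h2 : ∃ x y : X, LinearIndependent ℂ ![A x, A y])
    (hC : ∀ x y : X, ¬ LinearIndependent ℂ ![x, y, A x, A y]) :
    ∃ lam : ℂ, lam ≠ 0 ∧
      Module.rank ℂ (LinearMap.range ((A - lam • (1 : X →L[ℂ] X) : X →L[ℂ] X) : X →ₗ[ℂ] X)) ≤ 1 := by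
  obtain ⟨p0, q0, hpq⟩ := h2
  have hp0 : A p0 ≠ 0 := hpq.ne_zero 0
  by_cases hloc : ∃ x : X, LinearIndependent ℂ ![x, A x]
  · -- main branch
    obtain ⟨x, hxA⟩ := hloc
    have hx0 : x ≠ 0 := hxA.ne_zero 0
    have hAx0 : A x ≠ 0 := hxA.ne_zero 1
    set U0 : Submodule ℂ X := span ℂ ({x, A x} : Set X) with hU0
    haveI : FiniteDimensional ℂ U0 := FiniteDimensional.span_of_finite ℂ (by simp)
    -- Fact 1
    have hF1 : ∀ z, z ∉ U0 → ∃ c : ℂ, A z - c • z ∈ U0 := by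
      intro z hz
      by_cases hd : LinearIndependent ℂ ![A x, A z]
      · have h4 := hC x z
        have h3 : LinearIndependent ℂ ![x, z, A x] :=
          li_three_swap (li_three hxA hz)
        have hmem : A z ∈ span ℂ ({x, z, A x} : Set X) := by
          by_contra hns
          exact h4 (li_four_snoc h3 hns)
        have hset : ({x, z, A x} : Set X) = {z} ∪ {x, A x} := by
          ext t; simp; tauto
        rw [hset, Submodule.span_union] at hmem
        obtain ⟨s, hs, u, hu, hsum⟩ := Submodule.mem_sup.1 hmem
        obtain ⟨c, rfl⟩ := Submodule.mem_span_singleton.1 hs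
        exact ⟨c, by rw [← hsum]; simpa using hu⟩
      · obtain ⟨c, hc⟩ := dep_pair' hd hAx0
        refine ⟨0, ?_⟩
        rw [hc]
        simpa using U0.smul_mem c (Submodule.subset_span (by simp))
    -- uniqueness of the coefficient
    have hUNIQ : ∀ z, z ∉ U0 → ∀ c d : ℂ, A z - c • z ∈ U0 → A z - d • z ∈ U0 →
        c = d := by
      intro z hz c d hc hd
      by_contra hne
      have : (c - d) • z ∈ U0 := by
        have := U0.sub_mem hd hc
        simpa [sub_smul] using this
      have : z ∈ U0 := by
        have h' := U0.smul_mem (c - d)⁻¹ this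
        rwa [smul_smul, inv_mul_cancel₀ (sub_ne_zero.2 hne), one_smul] at h'
      exact hz this
    -- step: constancy for "very independent" pairs
    have hstep : ∀ z w : X, z ∉ U0 → w ∉ (U0 ⊔ span ℂ ({z} : Set X)) →
        ∀ c d : ℂ, A z - c • z ∈ U0 → A w - d • w ∈ U0 → c = d := by
      intro z w hz hw c d hc hd
      have hwU0 : w ∉ U0 := fun h => hw (Submodule.mem_sup_left h)
      have hzw : z + w ∉ U0 := by
        intro h
        exact hw (Submodule.mem_sup.2 ⟨z + w, h, -z,
          Submodule.mem_span_singleton.2 ⟨-1, by module⟩, by module⟩)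
      obtain ⟨e, he⟩ := hF1 (z + w) hzw
      have hsum : (A z - c • z) + (A w - d • w) ∈ U0 := U0.add_mem hc hd
      have hdiff : (c - e) • z + (d - e) • w ∈ U0 := by
        have := U0.sub_mem hsum he
        have heq : (A z - c • z) + (A w - d • w) - (A (z + w) - e • (z + w))
            = -((c - e) • z + (d - e) • w) := by
          rw [map_add]
          module
        rw [heq] at this
        simpa using U0.neg_mem this
      have hde : d = e := by
        by_contra hne
        have hw' : (d - e) • w ∈ U0 ⊔ span ℂ ({z} : Set X) := by
          refine Submodule.mem_sup.2 ⟨(c - e) • z + (d - e) • w, hdiff,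
            -((c - e) • z), Submodule.mem_span_singleton.2 ⟨-(c - e), by module⟩,
            by module⟩
        have hw'' : w ∈ U0 ⊔ span ℂ ({z} : Set X) := by
          have h' := Submodule.smul_mem _ (d - e)⁻¹ hw'
          rwa [smul_smul, inv_mul_cancel₀ (sub_ne_zero.2 hne), one_smul] at h'
        exact hw hw''
      subst hde
      have hce : (c - d) • z ∈ U0 := by
        have : (c - d) • z + (d - d) • w = (c - d) • z := by module
        rwa [this] at hdiff
      by_contra hne
      have : z ∈ U0 := by
        have h' := U0.smul_mem (c - d)⁻¹ hce
        rwa [smul_smul, inv_mul_cancel₀ (sub_ne_zero.2 hne), one_smul] at h'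
      exact hz this
    -- general constancy
    have hCONST : ∀ z w : X, z ∉ U0 → w ∉ U0 →
        ∀ c d : ℂ, A z - c • z ∈ U0 → A w - d • w ∈ U0 → c = d := by
      intro z w hz hw c d hc hd
      haveI : FiniteDimensional ℂ (span ℂ ({z} : Set X)) :=
        FiniteDimensional.span_of_finite ℂ (by simp)
      haveI : FiniteDimensional ℂ (span ℂ ({w} : Set X)) :=
        FiniteDimensional.span_of_finite ℂ (by simp)
      obtain ⟨v, hv⟩ := exists_not_mem_findim hX
        ((U0 ⊔ span ℂ ({z} : Set X)) ⊔ span ℂ ({w} : Set X))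
      have hv1 : v ∉ U0 ⊔ span ℂ ({z} : Set X) := fun h => hv (Submodule.mem_sup_left h)
      have hv2 : v ∉ U0 ⊔ span ℂ ({w} : Set X) := by
        intro h
        rcases Submodule.mem_sup.1 h with ⟨u, hu, s, hs, hsum⟩
        exact hv (Submodule.mem_sup.2 ⟨u, Submodule.mem_sup_left hu, s, hs, hsum⟩)
      have hvU0 : v ∉ U0 := fun h => hv1 (Submodule.mem_sup_left h)
      obtain ⟨e, he⟩ := hF1 v hvU0
      have h1 : c = e := hstep z v hz hv1 c e hc he
      have h2' : d = e := hstep w v hw hv2 d e hd he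
      rw [h1, h2']
    -- definition of lambda
    obtain ⟨z1, hz1⟩ := exists_not_mem_findim hX U0
    obtain ⟨lam, hlam⟩ := hF1 z1 hz1
    -- range of A - lam is inside U0
    have hRANGE : ∀ z : X, A z - lam • z ∈ U0 := by
      intro z
      by_cases hz : z ∈ U0
      · have hzz1 : z + z1 ∉ U0 := fun h => hz1 (by simpa using U0.sub_mem h hz)
        obtain ⟨e, he⟩ := hF1 (z + z1) hzz1
        have hee : e = lam := hCONST (z + z1) z1 hzz1 hz1 e lam he hlam
        rw [hee] at he
        have := U0.sub_mem he hlam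
        have heq : (A (z + z1) - lam • (z + z1)) - (A z1 - lam • z1)
            = A z - lam • z := by
          rw [map_add]; module
        rwa [heq] at this
      · obtain ⟨c, hc⟩ := hF1 z hz
        have : c = lam := hCONST z z1 hz hz1 c lam hc hlam
        rwa [this] at hc
    set R : X →L[ℂ] X := A - lam • (1 : X →L[ℂ] X) with hRdef
    have hRapp : ∀ z, R z = A z - lam • z := by
      intro z
      simp [hRdef]
    have hRle : LinearMap.range (R : X →ₗ[ℂ] X) ≤ U0 := by
      rintro _ ⟨z, rfl⟩
      rw [ContinuousLinearMap.coe_coe, hRapp]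
      exact hRANGE z
    haveI : FiniteDimensional ℂ (LinearMap.range (R : X →ₗ[ℂ] X)) :=
      Submodule.finiteDimensional_of_le hRle
    by_cases hrk : Module.rank ℂ (LinearMap.range (R : X →ₗ[ℂ] X)) ≤ 1
    · refine ⟨lam, ?_, hrk⟩
      rintro rfl
      have hR0 : R = A := by
        ext z; simp [hRapp]
      rw [hR0] at hrk
      exact dep_of_rank_le_one A hrk p0 q0 hpq
    · exfalso
      have hex : ∃ z w : X, LinearIndependent ℂ ![R z, R w] := by
        by_contra hno
        push_neg at hno
        exact hrk (rank_le_one_of_dep R hno)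
      obtain ⟨s1, s2, hab⟩ := hex
      set a := R s1 with ha
      set b := R s2 with hb
      have hker := ker_not_findim R hX
      haveI : FiniteDimensional ℂ (span ℂ ({a, b} : Set X)) :=
        FiniteDimensional.span_of_finite ℂ (by simp)
      obtain ⟨k2, hk2, hw2⟩ := exists_ker_shift (LinearMap.ker (R : X →ₗ[ℂ] X))
        (span ℂ ({a, b} : Set X)) hker s2
      set w2 := s2 + k2 with hw2def
      haveI : FiniteDimensional ℂ (span ℂ ({w2, a, b} : Set X)) :=
        FiniteDimensional.span_of_finite ℂ (by simp)
      obtain ⟨k1, hk1, hw1⟩ := exists_ker_shift (LinearMap.ker (R : X →ₗ[ℂ] X))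
        (span ℂ ({w2, a, b} : Set X)) hker s1
      set w1 := s1 + k1 with hw1def
      have hRw1 : R w1 = a := by
        rw [hw1def, map_add]
        have : R k1 = 0 := hk1
        rw [this, add_zero, ha]
      have hRw2 : R w2 = b := by
        rw [hw2def, map_add]
        have : R k2 = 0 := hk2
        rw [this, add_zero, hb]
      have hli4 : LinearIndependent ℂ ![w1, w2, a, b] :=
        li_four (li_three hab hw2) hw1
      have hAw1 : A w1 = lam • w1 + a := by
        have h' : A w1 - lam • w1 = a := (hRapp w1).symm.trans hRw1
        rw [← h']; module
      have hAw2 : A w2 = lam • w2 + b := by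
        have h' : A w2 - lam • w2 = b := (hRapp w2).symm.trans hRw2
        rw [← h']; module
      have := li_shear lam hli4
      rw [← hAw1, ← hAw2] at this
      exact hC w1 w2 this
  · -- locally scalar branch
    push_neg at hloc
    have hsc : ∀ z : X, z ≠ 0 → ∃ c : ℂ, A z = c • z := by
      intro z hz
      exact dep_pair' (hloc z) hz
    have hp0' : p0 ≠ 0 := by
      rintro rfl
      simp at hp0
    obtain ⟨lam, hlam⟩ := hsc p0 hp0'
    have hlam0 : lam ≠ 0 := by
      rintro rfl
      rw [hlam] at hp0
      simp at hp0
    have hall : ∀ z : X, A z = lam • z := by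
      intro z
      rcases eq_or_ne z 0 with rfl | hz
      · simp
      obtain ⟨c, hc⟩ := hsc z hz
      by_cases hzp : z ∈ span ℂ ({p0} : Set X)
      · obtain ⟨t, rfl⟩ := Submodule.mem_span_singleton.1 hzp
        rw [map_smul, hlam]
        module
      · have hzpair : LinearIndependent ℂ ![z, p0] := li_two hp0' hzp
        have hzn : z + p0 ≠ 0 := by
          intro h
          apply hzp
          have : z = -p0 := by
            have := h
            rw [add_eq_zero_iff_eq_neg] at this
            exact this
          rw [this]
          simpa using Submodule.smul_mem (span ℂ ({p0} : Set X)) (-1 : ℂ)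
            (Submodule.mem_span_singleton_self p0)
        obtain ⟨e, he⟩ := hsc (z + p0) hzn
        have hrel : (e - c) • z + (e - lam) • p0 = 0 := by
          have h1 : A (z + p0) = c • z + lam • p0 := by
            rw [map_add, hc, hlam]
          rw [he] at h1
          have h2 : (e - c) • z + (e - lam) • p0
              = e • (z + p0) - (c • z + lam • p0) := by module
          rw [h2, h1, sub_self]
        have hec := LinearIndependent.pair_iff.1 hzpair (e - c) (e - lam) hrel
        have hce : c = e := by
          have h0 := hec.1
          have : e = c := by linear_combination h0
          exact this.symm
        have hle : lam = e := by
          have h0 := hec.2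
          linear_combination -h0
        rw [hc, hce, hle]
    refine ⟨lam, hlam0, ?_⟩
    apply rank_le_one_of_dep
    intro z w hli
    apply hli.ne_zero 0
    have : A z - lam • z = 0 := by rw [hall z]; module
    simpa using this


theorem char (hX : ¬ FiniteDimensional ℂ X) (A : X →L[ℂ] X) :
    (∀ T : X →L[ℂ] X,
        Module.rank ℂ (span ℂ (analyticCore (T * A + A * T))) ≤ 2) ↔
      Module.rank ℂ (LinearMap.range (A : X →ₗ[ℂ] X)) ≤ 1 := by
  constructor
  · intro hQ
    by_contra hrk
    have hex : ∃ z w : X, LinearIndependent ℂ ![A z, A w] := by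
      by_contra hno
      push_neg at hno
      exact hrk (rank_le_one_of_dep A hno)
    by_cases hcase : ∃ x y : X, LinearIndependent ℂ ![x, y, A x, A y]
    · obtain ⟨x, y, hli⟩ := hcase
      obtain ⟨T, hT⟩ := case_one A hli
      exact hT (hQ T)
    · push_neg at hcase
      obtain ⟨lam, hlam, hrk1⟩ := classification A hX hex hcase
      obtain ⟨T, hT⟩ := case_two A hX hlam hrk1
      exact hT (hQ T)
  · intro h T
    have hsub : span ℂ (analyticCore (T * A + A * T)) ≤
        LinearMap.range ((T * A + A * T : X →L[ℂ] X) : X →ₗ[ℂ] X) :=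
      Submodule.span_le.2 (aC_subset_range _)
    exact (Submodule.rank_mono hsub).trans (rank_B_le A T h)

theorem rank_eq_one_iff' (G : X →L[ℂ] X) :
    Module.rank ℂ (LinearMap.range (G : X →ₗ[ℂ] X)) = 1 ↔
      (Module.rank ℂ (LinearMap.range (G : X →ₗ[ℂ] X)) ≤ 1 ∧ G ≠ 0) := by
  constructor
  · intro h
    refine ⟨le_of_eq h, ?_⟩
    rintro rfl
    have hb : LinearMap.range ((0 : X →L[ℂ] X) : X →ₗ[ℂ] X) = ⊥ := by
      ext z; simp [LinearMap.mem_range, eq_comm]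
    rw [hb] at h
    simp at h
  · rintro ⟨hle, hne⟩
    have : ∃ x, G x ≠ 0 := by
      by_contra hall
      push_neg at hall
      exact hne (by ext z; simp [hall])
    obtain ⟨x, hx⟩ := this
    haveI : Nontrivial (LinearMap.range (G : X →ₗ[ℂ] X)) := by
      refine nontrivial_of_ne ⟨G x, ⟨x, rfl⟩⟩ 0 ?_
      intro h
      exact hx (by simpa using congrArg Subtype.val h)
    have hpos : 0 < Module.rank ℂ (LinearMap.range (G : X →ₗ[ℂ] X)) := rank_pos
    exact le_antisymm hle (Cardinal.one_le_iff_pos.2 hpos)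


end AK

theorem phi_rankOne_iff {X : Type*} [NormedAddCommGroup X] [NormedSpace ℂ X]
    [CompleteSpace X] (hX : ¬ FiniteDimensional ℂ X)
    (phi : (X →L[ℂ] X) → (X →L[ℂ] X)) (hsurj : Function.Surjective phi)
    (hpres : ∀ T S : X →L[ℂ] X,
      analyticCore (phi T * phi S + phi S * phi T) = analyticCore (T * S + S * T)) :
    ∀ F : X →L[ℂ] X,
      Module.rank ℂ (LinearMap.range ((phi F) : X →ₗ[ℂ] X)) = 1 ↔
        Module.rank ℂ (LinearMap.range (F : X →ₗ[ℂ] X)) = 1 := by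
  intro F
  have hzero : ∀ G : X →L[ℂ] X,
      (∀ S : X →L[ℂ] X, analyticCore (S * G + G * S) = {0}) → G = 0 := by
    intro G h
    by_contra hG
    obtain ⟨T, z, hz, hzm⟩ := AK.exists_nonzero_core G hG
    have h2 : analyticCore (T * G + G * T) = ({0} : Set X) := h T
    rw [h2] at hzm
    exact hz hzm
  have h1 : phi F = 0 ↔ F = 0 := by
    constructor
    · intro h0
      apply hzero
      intro S
      rw [← hpres S F, h0]
      have : phi S * 0 + 0 * phi S = (0 : X →L[ℂ] X) := by
        simp
      rw [this]
      exact AK.aC_zero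
    · intro h0
      apply hzero
      intro S
      obtain ⟨T, rfl⟩ := hsurj S
      rw [hpres T F, h0]
      have : T * 0 + 0 * T = (0 : X →L[ℂ] X) := by simp
      rw [this]
      exact AK.aC_zero
  have h2 : Module.rank ℂ (LinearMap.range ((phi F) : X →ₗ[ℂ] X)) ≤ 1 ↔
      Module.rank ℂ (LinearMap.range (F : X →ₗ[ℂ] X)) ≤ 1 := by
    rw [← AK.char hX (phi F), ← AK.char hX F]
    constructor
    · intro h T
      rw [← hpres T F]
      exact h (phi T)
    · intro h T'
      obtain ⟨T, rfl⟩ := hsurj T'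
      rw [hpres T F]
      exact h T
  rw [AK.rank_eq_one_iff' (phi F), AK.rank_eq_one_iff' F, h2]
  exact and_congr Iff.rfl (not_congr h1)
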